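/- Let N = 2 and M ∈ (0,2], and suppose ξ⁰_1 = ξ⁰_2 with ξ̄(0) > 0. Then an admissible control α is optimal for the final cost if and only if α_1(t) + α_2(t) = M for almost every t ∈ [0,T] and its trajectory satisfies ξ_1(T) = ξ_2(T). -/

import Mathlib

open MeasureTheory Real

noncomputable section

/-- An admissible control for two agents: measurable, valued in `[0,1]` on `[0,T]`,
with `α_1(t) + α_2(t) ≤ M` for every `t ∈ [0,T]`. -/
def IsAdmissible2 (T M : ℝ) (α : ℝ → ℕ → ℝ) : Prop :=
  (∀ i, Measurable fun t => α t i) ∧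
  (∀ t ∈ Set.Icc (0 : ℝ) T, ∀ i ∈ Finset.Icc 1 2, 0 ≤ α t i ∧ α t i ≤ 1) ∧
  (∀ t ∈ Set.Icc (0 : ℝ) T, α t 1 + α t 2 ≤ M)

/-- The mean `ξ̄ = (ξ_1 + ξ_2)/2`. -/
def xbar2 (ξ : ℝ → ℕ → ℝ) (s : ℝ) : ℝ := (ξ s 1 + ξ s 2) / 2

/-- The trajectory of a control `α` with initial state `ξ0`. -/
def IsTrajectory2 (T : ℝ) (α : ℝ → ℕ → ℝ) (ξ0 : ℕ → ℝ) (ξ : ℝ → ℕ → ℝ) : Prop :=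
  (∀ i, ContinuousOn (fun t => ξ t i) (Set.Icc 0 T)) ∧
  (∀ t ∈ Set.Icc (0 : ℝ) T, ∀ i ∈ Finset.Icc 1 2,
    ξ t i = ξ0 i + ∫ s in (0 : ℝ)..t, (-(ξ s i) + (1 - α s i) * xbar2 ξ s))

/-- The migration functional `𝕍(t) = (ξ_1(t)² + ξ_2(t)²)/2`. -/
def migV2 (ξ : ℝ → ℕ → ℝ) (t : ℝ) : ℝ := ((ξ t 1) ^ 2 + (ξ t 2) ^ 2) / 2

/-- `α` (with trajectory `ξ`) is optimal for the final cost `𝕍(T)`. -/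
def IsOptimalFinal2 (T M : ℝ) (ξ0 : ℕ → ℝ) (α ξ : ℝ → ℕ → ℝ) : Prop :=
  IsAdmissible2 T M α ∧ IsTrajectory2 T α ξ0 ξ ∧
  ∀ β η, IsAdmissible2 T M β → IsTrajectory2 T β ξ0 η → migV2 ξ T ≤ migV2 η T

/-!
The mean `ξ̄` of the two agents solves the scalar linear equation `ξ̄' = -ā ξ̄`, where
`ā = (α₁ + α₂) / 2`, so `ξ̄(T) = ξ̄(0) exp (-∫₀ᵀ ā)`: as `ā` is only measurable, this comes from
`ξ̄ · exp (∫ ā)` being absolutely continuous with derivative zero almost everywhere.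
Since `𝕍 = ξ̄² + ((ξ₁ - ξ₂) / 2)²` and `∫₀ᵀ ā ≤ MT/2`, every admissible control yields
`𝕍(T) ≥ (ξ̄(0) e^{-MT/2})²`. For equal initial states the constant control `α₁ = α₂ = M/2`
attains this bound, and since `ξ̄(0) > 0` a control attains it exactly when `∫₀ᵀ ā = MT/2`,
i.e. `α₁ + α₂ = M` a.e., and `ξ₁(T) = ξ₂(T)`.
-/

open Set Filter

theorem LipschitzOnWith.comp_absolutelyContinuousOnInterval {X Y : Type*} [PseudoMetricSpace X]
    [PseudoMetricSpace Y] {g : X → Y} {f : ℝ → X} {K : NNReal} {s : Set X} {a b : ℝ}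
    (hg : LipschitzOnWith K g s) (hf : AbsolutelyContinuousOnInterval f a b)
    (hfs : MapsTo f (uIcc a b) s) : AbsolutelyContinuousOnInterval (g ∘ f) a b := by
  unfold AbsolutelyContinuousOnInterval at hf ⊢
  refine squeeze_zero' (Eventually.of_forall fun _ ↦ Finset.sum_nonneg fun _ _ ↦ dist_nonneg)
    ?_ (by simpa using hf.const_mul (K : ℝ))
  rw [eventually_inf_principal]
  filter_upwards with E hE
  rw [Finset.mul_sum]
  gcongr with i hi
  exact hg.dist_le_mul _ (hfs (hE.1 i hi).1) _ (hfs (hE.1 i hi).2)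

theorem AbsolutelyContinuousOnInterval.exp {f : ℝ → ℝ} {a b : ℝ}
    (hf : AbsolutelyContinuousOnInterval f a b) :
    AbsolutelyContinuousOnInterval (fun x ↦ Real.exp (f x)) a b := by
  obtain ⟨C, hC⟩ := hf.exists_bound
  obtain ⟨K, hK⟩ := (Real.contDiff_exp (n := 1)).contDiffOn.exists_lipschitzOnWith
    (s := Icc (-C) C) (by decide) (convex_Icc _ _) isCompact_Icc
  exact hK.comp_absolutelyContinuousOnInterval hf fun x hx ↦ abs_le.1 (hC x hx)

theorem eq_mul_exp_integral_of_eq_add_integral_mul {k u : ℝ → ℝ} {a b u₀ : ℝ}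
    (hk : IntervalIntegrable k volume a b) (hu : ContinuousOn u (uIcc a b))
    (h : ∀ t ∈ uIcc a b, u t = u₀ + ∫ s in a..t, k s * u s) :
    ∀ t ∈ uIcc a b, u t = u₀ * Real.exp (∫ s in a..t, k s) := by
  have hku : IntervalIntegrable (fun s ↦ k s * u s) volume a b := hk.mul_continuousOn hu
  set U : ℝ → ℝ := fun t ↦ u₀ + ∫ s in a..t, k s * u s
  set G : ℝ → ℝ := fun t ↦ ∫ s in a..t, k s
  have hUac : AbsolutelyContinuousOnInterval U a b :=
    (LipschitzWith.const u₀).lipschitzOnWith.absolutelyContinuousOnInterval.add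
      (hku.absolutelyContinuousOnInterval_intervalIntegral (by simp))
  have hGac : AbsolutelyContinuousOnInterval G a b :=
    hk.absolutelyContinuousOnInterval_intervalIntegral (by simp)
  -- `U · exp (-G)` has derivative `(k u - k U) exp (-G) = 0` almost everywhere
  obtain ⟨C, hC⟩ := (hUac.mul hGac.neg.exp).const_of_ae_hasDerivAt_zero (by
    filter_upwards [hku.ae_hasDerivAt_integral, hk.ae_hasDerivAt_integral] with x hUx hGx hx
    have hd := ((hUx hx a (by simp)).const_add u₀).mul (hGx hx a (by simp)).neg.exp
    rw [← h x hx] at hd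
    exact hd.congr_deriv (by ring))
  intro t ht
  have hCa := hC a (by simp)
  have hCt := hC t ht
  simp only [Pi.mul_apply, Pi.neg_apply, U, G, intervalIntegral.integral_same, add_zero,
    neg_zero, Real.exp_zero, mul_one] at hCa hCt
  have hexp : Real.exp (-G t) * Real.exp (G t) = 1 := by
    rw [← Real.exp_add, neg_add_cancel, Real.exp_zero]
  rw [h t ht]
  linear_combination Real.exp (G t) * hCt - Real.exp (G t) * hCa - U t * hexp

section TwoAgents

variable {T M : ℝ} {ξ0 : ℕ → ℝ} {β η : ℝ → ℕ → ℝ}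

def abar2 (β : ℝ → ℕ → ℝ) (s : ℝ) : ℝ := (β s 1 + β s 2) / 2

theorem IsAdmissible2.intervalIntegrable (hβ : IsAdmissible2 T M β) (hT : 0 ≤ T) {i : ℕ}
    (hi : i ∈ Finset.Icc 1 2) : IntervalIntegrable (fun s ↦ β s i) volume 0 T := by
  rw [intervalIntegrable_iff_integrableOn_Icc_of_le hT]
  refine IntegrableOn.of_bound measure_Icc_lt_top (hβ.1 i).aestronglyMeasurable 1
    ((ae_restrict_mem measurableSet_Icc).mono fun s hs ↦ ?_)
  obtain ⟨h0, h1⟩ := hβ.2.1 s hs i hi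
  rw [Real.norm_eq_abs, abs_le]
  constructor <;> linarith

theorem IsAdmissible2.intervalIntegrable_abar2 (hβ : IsAdmissible2 T M β) (hT : 0 ≤ T) :
    IntervalIntegrable (abar2 β) volume 0 T :=
  ((hβ.intervalIntegrable hT (by decide)).add
    (hβ.intervalIntegrable hT (by decide))).div_const 2

theorem integral_abar2_le (hβ : IsAdmissible2 T M β) (hT : 0 ≤ T) :
    ∫ s in (0 : ℝ)..T, abar2 β s ≤ M * T / 2 := by
  calc ∫ s in (0 : ℝ)..T, abar2 β s ≤ ∫ _ in (0 : ℝ)..T, M / 2 :=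
        intervalIntegral.integral_mono_on hT (hβ.intervalIntegrable_abar2 hT)
          intervalIntegrable_const fun s hs ↦ by
            simp only [abar2]; linarith [hβ.2.2 s hs]
    _ = M * T / 2 := by simp; ring

theorem integral_abar2_eq_iff (hβ : IsAdmissible2 T M β) (hT : 0 ≤ T) :
    ∫ s in (0 : ℝ)..T, abar2 β s = M * T / 2 ↔
      ∀ᵐ t ∂volume, t ∈ Icc (0 : ℝ) T → β t 1 + β t 2 = M := by
  have hint : IntervalIntegrable (fun s ↦ M / 2 - abar2 β s) volume 0 T :=
    intervalIntegrable_const.sub (hβ.intervalIntegrable_abar2 hT)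
  have hnonneg : 0 ≤ᵐ[volume.restrict (Ioc 0 T)] fun s ↦ M / 2 - abar2 β s :=
    (ae_restrict_mem measurableSet_Ioc).mono fun s hs ↦ by
      simp only [Pi.zero_apply, abar2]; linarith [hβ.2.2 s (Ioc_subset_Icc_self hs)]
  have hgap : ∫ s in (0 : ℝ)..T, (M / 2 - abar2 β s)
      = M * T / 2 - ∫ s in (0 : ℝ)..T, abar2 β s := by
    rw [intervalIntegral.integral_sub intervalIntegrable_const (hβ.intervalIntegrable_abar2 hT)]
    simp; ring
  rw [eq_comm, ← sub_eq_zero, ← hgap,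
    intervalIntegral.integral_eq_zero_iff_of_le_of_nonneg_ae hT hnonneg hint, EventuallyEq,
    ae_restrict_congr_set Ioc_ae_eq_Icc, ae_restrict_iff' measurableSet_Icc]
  refine eventually_congr (Eventually.of_forall fun t ↦ imp_congr_right fun _ ↦ ?_)
  simp only [abar2, Pi.zero_apply]
  constructor <;> intro h <;> linarith

theorem xbar2_eq_mul_exp (hβ : IsAdmissible2 T M β) (hη : IsTrajectory2 T β ξ0 η) {t : ℝ}
    (ht : t ∈ Icc 0 T) :
    xbar2 η t = (ξ0 1 + ξ0 2) / 2 * Real.exp (-∫ s in (0 : ℝ)..t, abar2 β s) := by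
  have hT : 0 ≤ T := ht.1.trans ht.2
  have hIcc : uIcc 0 T = Icc 0 T := uIcc_of_le hT
  have hxbar : ContinuousOn (xbar2 η) (Icc 0 T) := ((hη.1 1).add (hη.1 2)).div_const 2
  have hdrift (i : ℕ) (hi : i ∈ Finset.Icc 1 2) :
      IntervalIntegrable (fun s ↦ -(η s i) + (1 - β s i) * xbar2 η s) volume 0 T :=
    (hη.1 i).neg.intervalIntegrable_of_Icc hT |>.add <|
      (intervalIntegrable_const.sub (hβ.intervalIntegrable hT hi)).mul_continuousOn
        (hIcc ▸ hxbar)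
  have hsub : ∀ τ ∈ Icc 0 T, uIcc 0 τ ⊆ uIcc 0 T := fun τ hτ ↦
    uIcc_subset_uIcc left_mem_uIcc (hIcc ▸ hτ)
  have hsol := eq_mul_exp_integral_of_eq_add_integral_mul (u₀ := (ξ0 1 + ξ0 2) / 2)
    (hβ.intervalIntegrable_abar2 hT).neg (hIcc ▸ hxbar) fun τ hτ ↦ by
      rw [hIcc] at hτ
      have hsum := intervalIntegral.integral_add ((hdrift 1 (by decide)).mono_set (hsub τ hτ))
        ((hdrift 2 (by decide)).mono_set (hsub τ hτ))
      have hmean (s : ℝ) : -(η s 1) + (1 - β s 1) * xbar2 η s + (-(η s 2) + (1 - β s 2) * xbar2 η s)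
          = 2 * ((-abar2 β) s * xbar2 η s) := by
        simp only [xbar2, abar2, Pi.neg_apply]; ring
      simp only [hmean, intervalIntegral.integral_const_mul] at hsum
      rw [xbar2, hη.2 τ hτ 1 (by decide), hη.2 τ hτ 2 (by decide)]
      linarith
  rw [hsol t (hIcc ▸ ht)]
  simp only [Pi.neg_apply, intervalIntegral.integral_neg]

theorem migV2_eq_xbar2_sq_add (ξ : ℝ → ℕ → ℝ) (t : ℝ) :
    migV2 ξ t = xbar2 ξ t ^ 2 + ((ξ t 1 - ξ t 2) / 2) ^ 2 := by
  unfold migV2 xbar2; ring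

theorem migV2_final_eq (hT : 0 ≤ T) (hβ : IsAdmissible2 T M β) (hη : IsTrajectory2 T β ξ0 η) :
    migV2 η T = ((ξ0 1 + ξ0 2) / 2 * Real.exp (-∫ s in (0 : ℝ)..T, abar2 β s)) ^ 2
      + ((η T 1 - η T 2) / 2) ^ 2 := by
  rw [migV2_eq_xbar2_sq_add, xbar2_eq_mul_exp hβ hη ⟨hT, le_rfl⟩]

theorem sq_mul_exp_le_migV2 (hT : 0 ≤ T) (hx0 : 0 ≤ (ξ0 1 + ξ0 2) / 2)
    (hβ : IsAdmissible2 T M β) (hη : IsTrajectory2 T β ξ0 η) :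
    ((ξ0 1 + ξ0 2) / 2 * Real.exp (-(M * T / 2))) ^ 2 ≤ migV2 η T := by
  rw [migV2_final_eq hT hβ hη]
  have hA := integral_abar2_le hβ hT
  have hsq : ((ξ0 1 + ξ0 2) / 2 * Real.exp (-(M * T / 2))) ^ 2
      ≤ ((ξ0 1 + ξ0 2) / 2 * Real.exp (-∫ s in (0 : ℝ)..T, abar2 β s)) ^ 2 := by
    gcongr
  nlinarith [sq_nonneg ((η T 1 - η T 2) / 2)]

theorem migV2_eq_sq_mul_exp_iff (hT : 0 ≤ T) (hx0 : 0 < (ξ0 1 + ξ0 2) / 2)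
    (hβ : IsAdmissible2 T M β) (hη : IsTrajectory2 T β ξ0 η) :
    migV2 η T = ((ξ0 1 + ξ0 2) / 2 * Real.exp (-(M * T / 2))) ^ 2 ↔
      (∀ᵐ t ∂volume, t ∈ Icc (0 : ℝ) T → β t 1 + β t 2 = M) ∧ η T 1 = η T 2 := by
  rw [migV2_final_eq hT hβ hη, ← integral_abar2_eq_iff hβ hT]
  set A := ∫ s in (0 : ℝ)..T, abar2 β s
  set x0 := (ξ0 1 + ξ0 2) / 2
  have hle : x0 * Real.exp (-(M * T / 2)) ≤ x0 * Real.exp (-A) := by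
    gcongr; linarith [integral_abar2_le hβ hT]
  constructor
  · intro h
    have hsq : (x0 * Real.exp (-A)) ^ 2 = (x0 * Real.exp (-(M * T / 2))) ^ 2 := by
      nlinarith [sq_nonneg ((η T 1 - η T 2) / 2), pow_le_pow_left₀ (by positivity) hle 2]
    rw [sq_eq_sq₀ (by positivity) (by positivity), mul_right_inj' hx0.ne', Real.exp_eq_exp,
      neg_inj] at hsq
    refine ⟨hsq, ?_⟩
    rw [hsq, add_eq_left] at h
    linarith [pow_eq_zero_iff (n := 2) (by decide) |>.1 h]
  · rintro ⟨hA, hD⟩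
    rw [hA, hD, sub_self, zero_div, zero_pow two_ne_zero, add_zero]

theorem isAdmissible2_const {c : ℝ} (h0 : 0 ≤ c) (h1 : c ≤ 1) (hM : c + c ≤ M) :
    IsAdmissible2 T M fun _ _ ↦ c :=
  ⟨fun _ ↦ measurable_const, fun _ _ _ _ ↦ ⟨h0, h1⟩, fun _ _ ↦ hM⟩

theorem isTrajectory2_const (c : ℝ) (heq : ξ0 1 = ξ0 2) :
    IsTrajectory2 T (fun _ _ ↦ c) ξ0 fun t _ ↦ ξ0 1 * Real.exp (-c * t) := by
  refine ⟨fun _ ↦ by fun_prop, fun t _ i hi ↦ ?_⟩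
  have hderiv (s : ℝ) : HasDerivAt (fun s ↦ ξ0 1 * Real.exp (-c * s))
      (-(ξ0 1 * Real.exp (-c * s))
        + (1 - c) * xbar2 (fun t _ ↦ ξ0 1 * Real.exp (-c * t)) s) s := by
    refine (((hasDerivAt_id s).const_mul (-c)).exp.const_mul (ξ0 1)).congr_deriv ?_
    simp only [xbar2, id]; ring
  rw [intervalIntegral.integral_eq_sub_of_hasDerivAt (fun s _ ↦ hderiv s)
    (Continuous.intervalIntegrable (by unfold xbar2; fun_prop) _ _)]
  obtain ⟨hi1, hi2⟩ := Finset.mem_Icc.1 hi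
  interval_cases i <;> simp [heq]

end TwoAgents

/-- Two agents, `M ∈ (0,2]`, equal initial states with positive mean: a control is optimal
for the final cost iff it uses full strength `α_1 + α_2 = M` a.e. and brings the two agents
together at the final time. -/
theorem two_agents_equal_initial
    (T M : ℝ) (hT : 0 < T) (hM0 : 0 < M) (hM2 : M ≤ 2)
    (ξ0 : ℕ → ℝ) (heq : ξ0 1 = ξ0 2) (hbar : 0 < (ξ0 1 + ξ0 2) / 2)
    (α ξ : ℝ → ℕ → ℝ)
    (hα : IsAdmissible2 T M α) (hξ : IsTrajectory2 T α ξ0 ξ) :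
    (∀ β η, IsAdmissible2 T M β → IsTrajectory2 T β ξ0 η → migV2 ξ T ≤ migV2 η T) ↔
      ((∀ᵐ t ∂volume, t ∈ Set.Icc (0 : ℝ) T → α t 1 + α t 2 = M) ∧ ξ T 1 = ξ T 2) := by
  have hadm := isAdmissible2_const (T := T) (by positivity) (by linarith) (add_halves M).le
  have htraj := isTrajectory2_const (T := T) (M / 2) heq
  have hvalue := (migV2_eq_sq_mul_exp_iff hT.le hbar hadm htraj).2
    ⟨ae_of_all _ fun _ _ ↦ add_halves M, rfl⟩
  rw [← migV2_eq_sq_mul_exp_iff hT.le hbar hα hξ]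
  constructor
  · intro hopt
    exact le_antisymm ((hopt _ _ hadm htraj).trans hvalue.le)
      (sq_mul_exp_le_migV2 hT.le hbar.le hα hξ)
  · intro hmin β η hβ hη
    exact hmin ▸ sq_mul_exp_le_migV2 hT.le hbar.le hβ hη

end
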